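/- (No convergence outside the 2/h ball.) Let 0 < a ≤ 1 and h > 0, and let (x_k, y_k) be the gradient descent iterates on f_a with learning rate h. If (x_k, y_k) converges to a point (x*, y*) with x* y* = 1 and (x*)² + (y*)² > 2/h, then x_k y_k = 1 for some finite k. -/

import Mathlib

/-!
Write `u_k = x_k y_k - 1` and `ℓ_k = F_a'(x_k y_k)`. One step of GD gives
`u_{k+1} = u_k - h ℓ_k (x_k² + y_k²) + h² ℓ_k² x_k y_k`. Since `F_a'(1) = 0` and `F_a''(1) = 1`
(this is what the constant `C_a` normalizes), `ℓ_k = u_k (1 + o(1))` as long as `u_k ≠ 0`, so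
`u_{k+1} / u_k → 1 - h (x*² + y*²)`, a number of modulus `> 1`. Nonzero numbers whose successive
ratios tend to a limit of modulus `> 1` cannot tend to `0`, contradicting `u_k → 0`.
-/

open Filter

/-- `F_a(s) = C_a (log(e^{s-1}+1) + log(e^{1-s}+1))^a` with
`C_a = 1/(a 2^{a-2} (log 2)^{a-1})`, for `0 < a ≤ 1`. -/
noncomputable def Fa (a : ℝ) (s : ℝ) : ℝ :=
  (1 / (a * (2 : ℝ) ^ (a - 2) * Real.log 2 ^ (a - 1))) *
    (Real.log (Real.exp (s - 1) + 1) + Real.log (Real.exp (1 - s) + 1)) ^ a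

open Real Topology

noncomputable def softplus (t : ℝ) : ℝ := log (exp t + 1)

lemma softplus_pos (t : ℝ) : 0 < softplus t :=
  log_pos (by linarith [exp_pos t])

lemma hasDerivAt_softplus (t : ℝ) : HasDerivAt softplus (sigmoid t) t := by
  refine (((hasDerivAt_exp t).add_const 1).log (by positivity)).congr_deriv ?_
  rw [sigmoid_def, exp_neg]
  field_simp

noncomputable def softplusSum (s : ℝ) : ℝ := softplus (s - 1) + softplus (1 - s)

lemma Fa_eq (a s : ℝ) :
    Fa a s = 1 / (a * 2 ^ (a - 2) * log 2 ^ (a - 1)) * softplusSum s ^ a := rfl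

lemma softplusSum_pos (s : ℝ) : 0 < softplusSum s :=
  add_pos (softplus_pos _) (softplus_pos _)

lemma softplusSum_one : softplusSum 1 = 2 * log 2 := by
  norm_num [softplusSum, softplus]
  ring

lemma hasDerivAt_softplusSum (s : ℝ) :
    HasDerivAt softplusSum (2 * sigmoid (s - 1) - 1) s := by
  have h₁ : HasDerivAt (fun s => softplus (s - 1)) (sigmoid (s - 1)) s := by
    simpa using (hasDerivAt_softplus (s - 1)).comp_sub_const s 1
  have h₂ : HasDerivAt (fun s => softplus (1 - s)) (-sigmoid (1 - s)) s := by
    simpa using (hasDerivAt_softplus (1 - s)).comp_const_sub 1 s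
  refine (h₁.add h₂).congr_deriv ?_
  rw [show 1 - s = -(s - 1) by ring, sigmoid_neg]
  ring

lemma hasDerivAt_two_mul_sigmoid_sub_one_at_one :
    HasDerivAt (fun s => 2 * sigmoid (s - 1) - 1) (1 / 2) 1 := by
  have h : HasDerivAt (fun s => sigmoid (s - 1)) (sigmoid (1 - 1) * (1 - sigmoid (1 - 1))) 1 :=
    by simpa using (hasDerivAt_sigmoid (1 - 1)).comp_sub_const 1 1
  refine ((h.const_mul 2).sub_const 1).congr_deriv ?_
  norm_num [sigmoid_zero]

lemma deriv_Fa (a : ℝ) : deriv (Fa a) = fun s =>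
    1 / (a * 2 ^ (a - 2) * log 2 ^ (a - 1)) *
      (a * softplusSum s ^ (a - 1) * (2 * sigmoid (s - 1) - 1)) := by
  funext s
  rw [show Fa a = fun s => _ from funext (Fa_eq a)]
  exact (((hasDerivAt_softplusSum s).rpow_const (Or.inl (softplusSum_pos s).ne')).const_mul _).deriv
    |>.trans (by ring)

lemma Fa_normalization {a : ℝ} (ha : a ≠ 0) :
    1 / (a * 2 ^ (a - 2) * log 2 ^ (a - 1)) * (a * (2 * log 2) ^ (a - 1) * (1 / 2)) = 1 := by
  have hlog : 0 < log 2 := log_pos one_lt_two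
  rw [mul_rpow zero_le_two hlog.le, show a - 1 = a - 2 + 1 by ring,
    rpow_add_one two_ne_zero, show a - 2 + 1 = a - 1 by ring]
  have : (2 : ℝ) ^ (a - 2) ≠ 0 := (rpow_pos_of_pos two_pos _).ne'
  have : log 2 ^ (a - 1) ≠ 0 := (rpow_pos_of_pos hlog _).ne'
  field_simp

lemma deriv_Fa_one (a : ℝ) : deriv (Fa a) 1 = 0 := by
  simp [deriv_Fa]

lemma hasDerivAt_deriv_Fa_one {a : ℝ} (ha : a ≠ 0) : HasDerivAt (deriv (Fa a)) 1 1 := by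
  have hP := (hasDerivAt_softplusSum 1).rpow_const (p := a - 1) (Or.inl (softplusSum_pos 1).ne')
  rw [deriv_Fa]
  refine (((hP.const_mul a).mul hasDerivAt_two_mul_sigmoid_sub_one_at_one).const_mul _).congr_deriv ?_
  norm_num [sigmoid_zero, softplusSum_one]
  linear_combination Fa_normalization ha

lemma tendsto_div_sub_of_hasDerivAt {f : ℝ → ℝ} {f' x : ℝ} (hf : HasDerivAt f f' x)
    (hx : f x = 0) : Tendsto (fun s => f s / (s - x)) (𝓝[≠] x) (𝓝 f') :=
  (hasDerivAt_iff_tendsto_slope.mp hf).congr fun s => by rw [slope_def_field, hx, sub_zero]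

lemma tendsto_deriv_Fa_div {a : ℝ} (ha : a ≠ 0) :
    Tendsto (fun s => deriv (Fa a) s / (s - 1)) (𝓝[≠] 1) (𝓝 1) :=
  tendsto_div_sub_of_hasDerivAt (hasDerivAt_deriv_Fa_one ha) (deriv_Fa_one a)

lemma not_tendsto_zero_of_abs_ratio_tendsto {u : ℕ → ℝ} {l : ℝ} (hl : 1 < l)
    (hu : ∀ n, u n ≠ 0) (h : Tendsto (fun n => |u (n + 1) / u n|) atTop (𝓝 l)) :
    ¬Tendsto u atTop (𝓝 0) := by
  intro hu0
  obtain ⟨r, hr₁, hrl⟩ := exists_between hl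
  obtain ⟨N, hN⟩ := eventually_atTop.mp (h.eventually_const_le hrl)
  have hgrow : ∀ n, r * |u (n + N)| ≤ |u (n + 1 + N)| := fun n => by
    have := hN (n + N) (Nat.le_add_left N n)
    rw [abs_div, le_div_iff₀ (abs_pos.mpr (hu _))] at this
    rwa [Nat.add_right_comm]
  exact not_tendsto_atTop_of_tendsto_nhds (by simpa using (hu0.comp (tendsto_add_atTop_nat N)).abs)
    (tendsto_atTop_of_geom_le (by simpa using hu N) hr₁ hgrow)

lemma gd_mul_sub_one_div {h ℓ x y : ℝ} (hxy : x * y - 1 ≠ 0) :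
    ((x - h * ℓ * y) * (y - h * ℓ * x) - 1) / (x * y - 1)
      = 1 - h * (ℓ / (x * y - 1)) * (x ^ 2 + y ^ 2)
        + h ^ 2 * (ℓ / (x * y - 1)) ^ 2 * (x * y - 1) * (x * y - 1 + 1) := by
  field_simp
  ring

theorem abs_one_sub_le_one_of_gd_tendsto {F : ℝ → ℝ} {κ h : ℝ}
    (hF : Tendsto (fun s => deriv F s / (s - 1)) (𝓝[≠] 1) (𝓝 κ)) {x y : ℕ → ℝ}
    (hGD : ∀ k, x (k + 1) = x k - h * deriv F (x k * y k) * y k ∧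
                y (k + 1) = y k - h * deriv F (x k * y k) * x k)
    {xs ys : ℝ} (hconv : Tendsto (fun k => (x k, y k)) atTop (𝓝 (xs, ys)))
    (hmin : xs * ys = 1) (hne : ∀ k, x k * y k ≠ 1) :
    |1 - h * κ * (xs ^ 2 + ys ^ 2)| ≤ 1 := by
  set u := fun k => x k * y k - 1 with hu_def
  set g := fun k => deriv F (x k * y k) / u k with hg_def
  have hu_ne (k : ℕ) : u k ≠ 0 := sub_ne_zero.mpr (hne k)
  have hx : Tendsto x atTop (𝓝 xs) := (continuous_fst.tendsto _).comp hconv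
  have hy : Tendsto y atTop (𝓝 ys) := (continuous_snd.tendsto _).comp hconv
  have hs : Tendsto (fun k => x k * y k) atTop (𝓝 1) := hmin ▸ hx.mul hy
  have hu : Tendsto u atTop (𝓝 0) := by simpa using hs.sub_const 1
  have hg : Tendsto g atTop (𝓝 κ) :=
    hF.comp (tendsto_nhdsWithin_iff.mpr ⟨hs, Eventually.of_forall hne⟩)
  have hratio (k : ℕ) : u (k + 1) / u k
      = 1 - h * g k * (x k ^ 2 + y k ^ 2) + h ^ 2 * g k ^ 2 * u k * (u k + 1) := by
    simp only [hu_def, hg_def, (hGD k).1, (hGD k).2]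
    exact gd_mul_sub_one_div (hu_ne k)
  have hlim : Tendsto (fun k => u (k + 1) / u k) atTop
      (𝓝 (1 - h * κ * (xs ^ 2 + ys ^ 2) + h ^ 2 * κ ^ 2 * 0 * (0 + 1))) :=
    ((tendsto_const_nhds.sub ((tendsto_const_nhds.mul hg).mul
      ((hx.pow 2).add (hy.pow 2)))).add (((tendsto_const_nhds.mul (hg.pow 2)).mul hu).mul
      (hu.add_const 1))).congr fun k => (hratio k).symm
  by_contra! hgt
  exact not_tendsto_zero_of_abs_ratio_tendsto hgt hu_ne (by simpa using hlim.abs) hu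

theorem stmt_16_general (a : ℝ) (ha0 : 0 < a) (h : ℝ) (hh : 0 < h)
    (x y : ℕ → ℝ)
    (hGD : ∀ k, x (k + 1) = x k - h * deriv (Fa a) (x k * y k) * y k ∧
                y (k + 1) = y k - h * deriv (Fa a) (x k * y k) * x k)
    (xs ys : ℝ)
    (hconv : Tendsto (fun k => (x k, y k)) atTop (nhds (xs, ys)))
    (hmin : xs * ys = 1) (hsharp : xs ^ 2 + ys ^ 2 > 2 / h) :
    ∃ k, x k * y k = 1 := by
  by_contra! hne
  have hcontract := abs_one_sub_le_one_of_gd_tendsto (tendsto_deriv_Fa_div ha0.ne') hGD hconv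
    hmin hne
  have hsharp' : 2 < h * (xs ^ 2 + ys ^ 2) := (div_lt_iff₀' hh).mp hsharp
  rw [mul_one] at hcontract
  linarith [(abs_le.mp hcontract).1]

/-- GD on `f_a` cannot converge to a minimizer outside the `2/h` ball unless
some iterate hits the set of minimizers exactly. -/
theorem stmt_16 (a : ℝ) (ha0 : 0 < a) (ha1 : a ≤ 1) (h : ℝ) (hh : 0 < h)
    (x y : ℕ → ℝ)
    (hGD : ∀ k, x (k + 1) = x k - h * deriv (Fa a) (x k * y k) * y k ∧
                y (k + 1) = y k - h * deriv (Fa a) (x k * y k) * x k)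
    (xs ys : ℝ)
    (hconv : Tendsto (fun k => (x k, y k)) atTop (nhds (xs, ys)))
    (hmin : xs * ys = 1) (hsharp : xs ^ 2 + ys ^ 2 > 2 / h) :
    ∃ k, x k * y k = 1 :=
  stmt_16_general a ha0 h hh x y hGD xs ys hconv hmin hsharp
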